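/- arXiv:2510.19613 — 2 statements merged into one kernel-verified Lean document; each statement's English description precedes it below -/
import Mathlib

section
/- Let X be a compact metric space with a continuous action of a group G, K ⊆ X, F a finite subset of G, and U a finite open cover of X with Lebesgue number δ > 0. Then for any δ' ∈ (0, δ/2), N(U_F, K) ≤ spn(d, F, δ', K), where N(U_F, K) is the minimal number of elements of the refined cover U_F = ⋁_{g∈F} g⁻¹U needed to cover K. -/
/-!
Cover `K` by the Bowen balls `{x | ∀ g ∈ F, dist (g • x) (g • y) < δ'}` centred at a minimal
`(F, δ')`-spanning set, which is finite by compactness. For each `g ∈ F` the ball of radius `δ'`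
about `g • y` has diameter at most `2δ' < δ`, so it lies in some `u_g ∈ U`; hence the Bowen ball
about `y` lies in the element `⋂_{g ∈ F} g⁻¹ u_g` of `U_F`, and these elements cover `K`.
-/

open Filter Set

section BowenBall

variable {X G : Type*} [MetricSpace X] [Group G] [MulAction G X]

def bowenBall (F : Finset G) (y : X) (r : ℝ) : Set X :=
  {x | ∀ g ∈ F, dist (g • x) (g • y) < r}

lemma bowenBall_eq_biInter (F : Finset G) (y : X) (r : ℝ) :
    bowenBall F y r = ⋂ g ∈ F, (g • ·) ⁻¹' Metric.ball (g • y) r := by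
  ext x
  simp [bowenBall, Metric.mem_ball]

lemma isOpen_bowenBall (hcont : ∀ g : G, Continuous fun x : X => g • x)
    (F : Finset G) (y : X) (r : ℝ) : IsOpen (bowenBall F y r) := by
  rw [bowenBall_eq_biInter]
  exact isOpen_biInter_finset fun g _ => Metric.isOpen_ball.preimage (hcont g)

lemma mem_bowenBall_self (F : Finset G) (y : X) {r : ℝ} (hr : 0 < r) : y ∈ bowenBall F y r :=
  fun g _ => by simpa using hr

lemma IsCompact.exists_finset_bowenBall_cover {K : Set X} (hK : IsCompact K)
    (hcont : ∀ g : G, Continuous fun x : X => g • x) (F : Finset G) {r : ℝ} (hr : 0 < r) :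
    ∃ E : Finset X, K ⊆ ⋃ y ∈ E, bowenBall F y r :=
  hK.elim_finite_subcover (bowenBall F · r) (isOpen_bowenBall hcont F · r)
    fun x _ => mem_iUnion.2 ⟨x, mem_bowenBall_self F x hr⟩

variable {U : Set (Set X)} {δ r : ℝ}

lemma exists_subset_refinement_of_bowenBall
    (hLeb : ∀ A : Set X, Metric.diam A < δ → ∃ u ∈ U, A ⊆ u) (hr : 0 ≤ r) (hrδ : 2 * r < δ)
    (F : Finset G) (y : X) :
    ∃ u : G → Set X, (∀ g, u g ∈ U) ∧ bowenBall F y r ⊆ {x | ∀ g ∈ F, g • x ∈ u g} := by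
  have hball (g : G) : ∃ u ∈ U, Metric.ball (g • y) r ⊆ u :=
    hLeb _ ((Metric.diam_ball hr).trans_lt hrδ)
  choose u hu hsub using hball
  exact ⟨u, hu, fun x hx g hg => hsub g (Metric.mem_ball.2 (hx g hg))⟩

lemma exists_refinement_cover_card_le
    (hLeb : ∀ A : Set X, Metric.diam A < δ → ∃ u ∈ U, A ⊆ u) (hr : 0 ≤ r) (hrδ : 2 * r < δ)
    {F : Finset G} {K : Set X} {E : Finset X} (hE : ∀ x ∈ K, ∃ y ∈ E, x ∈ bowenBall F y r) :
    ∃ C : Finset (Set X),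
      (∀ A ∈ C, ∃ u : G → Set X, (∀ g ∈ F, u g ∈ U) ∧ A = {x : X | ∀ g ∈ F, g • x ∈ u g}) ∧
      K ⊆ ⋃ A ∈ C, A ∧ C.card ≤ E.card := by
  classical
  choose u hu hsub using exists_subset_refinement_of_bowenBall hLeb hr hrδ F
  refine ⟨E.image fun y => {x | ∀ g ∈ F, g • x ∈ u y g}, ?_, ?_, Finset.card_image_le⟩
  · intro A hA
    obtain ⟨y, -, rfl⟩ := Finset.mem_image.1 hA
    exact ⟨u y, fun g _ => hu y g, rfl⟩
  · intro x hx
    obtain ⟨y, hy, hxy⟩ := hE x hx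
    exact mem_iUnion₂.2 ⟨_, Finset.mem_image_of_mem _ hy, hsub y hxy⟩

end BowenBall

theorem stmt_2_general {X G : Type*} [MetricSpace X] [CompactSpace X] [Group G] [MulAction G X]
    (hcont : ∀ g : G, Continuous fun x : X => g • x)
    (K : Set X) (F : Finset G)
    (U : Finset (Set X))
    (δ δ' : ℝ)
    (hLeb : ∀ A : Set X, Metric.diam A < δ → ∃ u ∈ U, A ⊆ u)
    (hδ'1 : 0 < δ') (hδ'2 : δ' < δ / 2) :
    sInf {n : ℕ | ∃ C : Finset (Set X),
        (∀ A ∈ C, ∃ u : G → Set X, (∀ g ∈ F, u g ∈ U) ∧ A = {x : X | ∀ g ∈ F, g • x ∈ u g}) ∧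
        (K ⊆ ⋃ A ∈ C, A) ∧ C.card = n} ≤
    sInf {n : ℕ | ∃ E : Finset X,
        (∀ x ∈ K, ∃ y ∈ E, ∀ g ∈ F, dist (g • x) (g • y) < δ') ∧ E.card = n} := by
  have hspanning : {n : ℕ | ∃ E : Finset X,
      (∀ x ∈ K, ∃ y ∈ E, ∀ g ∈ F, dist (g • x) (g • y) < δ') ∧ E.card = n}.Nonempty := by
    obtain ⟨E, hE⟩ := isCompact_univ.exists_finset_bowenBall_cover hcont F hδ'1
    exact ⟨E.card, E, fun x _ => by simpa [bowenBall] using hE (mem_univ x), rfl⟩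
  obtain ⟨E, hEspan, hEcard⟩ := Nat.sInf_mem hspanning
  obtain ⟨C, hCref, hCcov, hCcard⟩ :=
    exists_refinement_cover_card_le (U := ↑U) hLeb hδ'1.le (by linarith) hEspan
  rw [← hEcard]
  refine (Nat.sInf_le ?_).trans hCcard
  exact ⟨C, hCref, hCcov, rfl⟩

/-- If U is a finite open cover with Lebesgue number δ and 0 < δ' < δ/2,
then N(U_F, K) ≤ spn(d, F, δ', K). -/
theorem stmt_2 {X G : Type*} [MetricSpace X] [CompactSpace X] [Group G] [MulAction G X]
    (hcont : ∀ g : G, Continuous fun x : X => g • x)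
    (K : Set X) (F : Finset G)
    (U : Finset (Set X)) (hUopen : ∀ u ∈ U, IsOpen u) (hUcov : ∀ x : X, ∃ u ∈ U, x ∈ u)
    (δ δ' : ℝ) (hδ : 0 < δ)
    (hLeb : ∀ A : Set X, Metric.diam A < δ → ∃ u ∈ U, A ⊆ u)
    (hδ'1 : 0 < δ') (hδ'2 : δ' < δ / 2) :
    sInf {n : ℕ | ∃ C : Finset (Set X),
        (∀ A ∈ C, ∃ u : G → Set X, (∀ g ∈ F, u g ∈ U) ∧ A = {x : X | ∀ g ∈ F, g • x ∈ u g}) ∧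
        (K ⊆ ⋃ A ∈ C, A) ∧ C.card = n} ≤
    sInf {n : ℕ | ∃ E : Finset X,
        (∀ x ∈ K, ∃ y ∈ E, ∀ g ∈ F, dist (g • x) (g • y) < δ') ∧ E.card = n} :=
  stmt_2_general hcont K F U δ δ' hLeb hδ'1 hδ'2
end

section
/- (Constructing a subset with prescribed separated-set growth rate) Let X be a compact metric space, G a countable group acting continuously on X, and {F_n} an increasing sequence of finite subsets of G with e_G ∈ F_1 and |F_n| → ∞. Let K₀ ⊆ X be a countable compact set with unique limit point x₀, let δ > 0 and 0 < h be such that h_sep(d, δ, K₀) := limsup_n (1/|F_n|) log sep(d, F_n, δ, K₀) > h. Then there exists a countable compact subset A ⊆ K₀ with unique limit point x₀ such that h_sep(d, δ, A) = h. -/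
open Filter Set

variable {X G : Type*}

/-- Maximal cardinality of an (F,ε)-separated subset of K. -/
noncomputable def sepCard [MetricSpace X] [Group G] [MulAction G X] (F : Finset G) (ε : ℝ)
    (K : Set X) : ℕ :=
  sSup {n : ℕ | ∃ D : Finset X, ↑D ⊆ K ∧
    (∀ x ∈ D, ∀ y ∈ D, x ≠ y → ∃ g ∈ F, ε ≤ dist (g • x) (g • y)) ∧ D.card = n}

/-- h_sep(d, ε, K) = limsup_n (1/|F_n|) log sep(d, F_n, ε, K). -/
noncomputable def hSep [MetricSpace X] [Group G] [MulAction G X] (Fn : ℕ → Finset G) (ε : ℝ)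
    (K : Set X) : ℝ :=
  Filter.limsup (fun n => Real.log (sepCard (Fn n) ε K : ℕ) / ((Fn n).card : ℝ)) Filter.atTop

/-!
Choose scales `φ i` along which `|F_{φ i}|` grows fast, and finite sets `A i ⊆ K₀ \ {x₀}`
shrinking to `x₀` whose points stay `δ/2`-close to `x₀` under every `g ∈ F_{φ i}`. Because
`sep(F_n, δ, K₀)` beats `e^{h|F_n|}` by any factor infinitely often, and removing the finitely
many points of `K₀` far from `x₀` costs a bounded amount, there is a least scale `l i ≥ φ i` at
which `K₀` near `x₀` carries `⌈e^{h|F_{l i}|}⌉` separated points; taking these as `A i`, the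
minimality of `l i` gives `sep(F_n, δ, A i) ≤ ⌈e^{h|F_n|}⌉` for all `n ≥ φ i`.

Let `A = {x₀} ∪ ⋃ A i`. At a scale `φ k ≤ n < φ (k + 1)` all of `x₀` and the later `A j` lie
within `δ/2` of `x₀` along `F_n`, so they contain at most one separated point and
`sep(F_n, δ, A) ≤ (k + 2)⌈e^{h|F_n|}⌉`; this gives `h_sep ≤ h`, and the scales `l i` give `≥ h`.
-/

open Topology

section Separated

variable [MetricSpace X] [Group G] [MulAction G X]

def IsSeparatedBy (F : Finset G) (ε : ℝ) (D : Set X) : Prop :=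
  D.Pairwise fun x y => ∃ g ∈ F, ε ≤ dist (g • x) (g • y)

theorem IsSeparatedBy.mono {F : Finset G} {ε : ℝ} {D E : Set X} (hDE : D ⊆ E)
    (hE : IsSeparatedBy F ε E) : IsSeparatedBy F ε D :=
  Set.Pairwise.mono hDE hE

theorem IsSeparatedBy.eq_of_dist_lt_half {F : Finset G} {ε : ℝ} {D : Set X}
    (hD : IsSeparatedBy F ε D) {a b y : X} (ha : a ∈ D) (hb : b ∈ D)
    (hay : ∀ g ∈ F, dist (g • a) (g • y) < ε / 2)
    (hby : ∀ g ∈ F, dist (g • b) (g • y) < ε / 2) : a = b := by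
  by_contra hab
  obtain ⟨g, hg, hgab⟩ := hD ha hb hab
  linarith [dist_triangle_right (g • a) (g • b) (g • y), hay g hg, hby g hg]

-- `sepCard F ε K` is `sSup (separatedCards F ε K)` by `rfl`.
def separatedCards (F : Finset G) (ε : ℝ) (K : Set X) : Set ℕ :=
  {n | ∃ D : Finset X, ↑D ⊆ K ∧ IsSeparatedBy F ε (D : Set X) ∧ D.card = n}

theorem zero_mem_separatedCards (F : Finset G) (ε : ℝ) (K : Set X) :
    0 ∈ separatedCards F ε K :=
  ⟨∅, by simp, by simp [IsSeparatedBy], rfl⟩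

theorem sepCard_le {F : Finset G} {ε : ℝ} {K : Set X} {B : ℕ}
    (hB : ∀ D : Finset X, ↑D ⊆ K → IsSeparatedBy F ε (D : Set X) → D.card ≤ B) :
    sepCard F ε K ≤ B := by
  refine csSup_le ⟨0, zero_mem_separatedCards F ε K⟩ ?_
  rintro n ⟨D, hDK, hD, rfl⟩
  exact hB D hDK hD

theorem sepCard_le_card (F : Finset G) (ε : ℝ) (t : Finset X) :
    sepCard F ε (t : Set X) ≤ t.card :=
  sepCard_le fun _ hD _ => Finset.card_le_card (Finset.coe_subset.1 hD)

theorem sepCard_setOf_dist_lt_half_le_one (F : Finset G) (ε : ℝ) (y : X) :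
    sepCard F ε {x | ∀ g ∈ F, dist (g • x) (g • y) < ε / 2} ≤ 1 :=
  sepCard_le fun _ hDK hD =>
    Finset.card_le_one.2 fun _ ha _ hb => hD.eq_of_dist_lt_half ha hb (hDK ha) (hDK hb)

theorem eventually_forall_dist_smul_lt (hcont : ∀ g : G, Continuous fun x : X => g • x)
    (F : Finset G) (y : X) {ε : ℝ} (hε : 0 < ε) :
    ∀ᶠ x in 𝓝 y, ∀ g ∈ F, dist (g • x) (g • y) < ε :=
  (eventually_all_finset F).2 fun g _ =>
    Metric.tendsto_nhds.1 (hcont g).continuousAt ε hε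

variable [CompactSpace X]

theorem exists_card_le_of_isSeparatedBy (hcont : ∀ g : G, Continuous fun x : X => g • x)
    (F : Finset G) {ε : ℝ} (hε : 0 < ε) :
    ∃ B : ℕ, ∀ D : Finset X, IsSeparatedBy F ε (D : Set X) → D.card ≤ B := by
  obtain ⟨t, -, ht⟩ := isCompact_univ.elim_nhds_subcover
    (fun x => {y | ∀ g ∈ F, dist (g • y) (g • x) < ε / 2})
    (fun x _ => eventually_forall_dist_smul_lt hcont F x (half_pos hε))
  choose c hct hc using fun y => mem_iUnion₂.1 (ht (mem_univ y))
  exact ⟨t.card, fun D hD => Finset.card_le_card_of_injOn c (fun y _ => hct y)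
    fun a ha b hb hab => hD.eq_of_dist_lt_half ha hb (hc a) (hab ▸ hc b)⟩

theorem bddAbove_separatedCards (hcont : ∀ g : G, Continuous fun x : X => g • x)
    (F : Finset G) {ε : ℝ} (hε : 0 < ε) (K : Set X) : BddAbove (separatedCards F ε K) := by
  obtain ⟨B, hB⟩ := exists_card_le_of_isSeparatedBy hcont F hε
  exact ⟨B, fun n ⟨D, _, hD, hn⟩ => hn ▸ hB D hD⟩

theorem le_sepCard (hcont : ∀ g : G, Continuous fun x : X => g • x) {F : Finset G} {ε : ℝ}
    (hε : 0 < ε) {K : Set X} {D : Finset X} (hDK : ↑D ⊆ K)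
    (hD : IsSeparatedBy F ε (D : Set X)) : D.card ≤ sepCard F ε K :=
  le_csSup (bddAbove_separatedCards hcont F hε K) ⟨D, hDK, hD, rfl⟩

theorem exists_card_eq_sepCard (hcont : ∀ g : G, Continuous fun x : X => g • x) (F : Finset G)
    {ε : ℝ} (hε : 0 < ε) (K : Set X) :
    ∃ D : Finset X, ↑D ⊆ K ∧ IsSeparatedBy F ε (D : Set X) ∧ D.card = sepCard F ε K :=
  Nat.sSup_mem ⟨0, zero_mem_separatedCards F ε K⟩ (bddAbove_separatedCards hcont F hε K)

theorem sepCard_mono (hcont : ∀ g : G, Continuous fun x : X => g • x) {F : Finset G} {ε : ℝ}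
    (hε : 0 < ε) {K L : Set X} (hKL : K ⊆ L) : sepCard F ε K ≤ sepCard F ε L :=
  sepCard_le fun _ hDK hD => le_sepCard hcont hε (hDK.trans hKL) hD

theorem sepCard_union_le (hcont : ∀ g : G, Continuous fun x : X => g • x) (F : Finset G)
    {ε : ℝ} (hε : 0 < ε) (K L : Set X) :
    sepCard F ε (K ∪ L) ≤ sepCard F ε K + sepCard F ε L := by
  classical
  refine sepCard_le fun D hDKL hD => ?_
  rw [← Finset.card_filter_add_card_filter_not (s := D) (· ∈ K)]
  refine add_le_add (le_sepCard hcont hε (fun x hx => ?_) (hD.mono ?_))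
    (le_sepCard hcont hε (fun x hx => ?_) (hD.mono ?_))
  · exact (Finset.mem_filter.1 hx).2
  · exact Finset.coe_subset.2 (Finset.filter_subset _ _)
  · obtain ⟨hxD, hxK⟩ := Finset.mem_filter.1 hx
    exact (hDKL hxD).resolve_left hxK
  · exact Finset.coe_subset.2 (Finset.filter_subset _ _)

theorem sepCard_biUnion_le {ι : Type*} (hcont : ∀ g : G, Continuous fun x : X => g • x)
    (F : Finset G) {ε : ℝ} (hε : 0 < ε) (t : Finset ι) (K : ι → Set X) :
    sepCard F ε (⋃ i ∈ t, K i) ≤ ∑ i ∈ t, sepCard F ε (K i) := by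
  classical
  induction t using Finset.induction_on with
  | empty => simpa using sepCard_le_card F ε ∅
  | insert i t hi ih =>
    rw [Finset.set_biUnion_insert, Finset.sum_insert hi]
    exact (sepCard_union_le hcont F hε _ _).trans (add_le_add_right ih _)

end Separated

noncomputable def ceilExpCard (Fn : ℕ → Finset G) (h : ℝ) (n : ℕ) : ℕ :=
  ⌈Real.exp (h * (Fn n).card)⌉₊

theorem ceilExpCard_mono {Fn : ℕ → Finset G} (hmono : Monotone Fn) {h : ℝ} (hh : 0 ≤ h) :
    Monotone (ceilExpCard Fn h) := fun _ _ hmn =>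
  Nat.ceil_mono <| Real.exp_le_exp.2 <|
    mul_le_mul_of_nonneg_left (by exact_mod_cast Finset.card_le_card (hmono hmn)) hh

theorem exp_le_ceilExpCard (Fn : ℕ → Finset G) (h : ℝ) (n : ℕ) :
    Real.exp (h * (Fn n).card) ≤ ceilExpCard Fn h n :=
  Nat.le_ceil _

theorem one_le_ceilExpCard (Fn : ℕ → Finset G) (h : ℝ) (n : ℕ) : 1 ≤ ceilExpCard Fn h n :=
  Nat.one_le_iff_ne_zero.2 (Nat.ceil_pos.2 (Real.exp_pos _)).ne'

theorem ceilExpCard_le_two_mul_exp (Fn : ℕ → Finset G) {h : ℝ} (hh : 0 ≤ h) (n : ℕ) :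
    (ceilExpCard Fn h n : ℝ) ≤ 2 * Real.exp (h * (Fn n).card) := by
  have hexp : 1 ≤ Real.exp (h * (Fn n).card) := Real.one_le_exp (by positivity)
  have := Nat.ceil_lt_add_one (Real.exp_pos (h * (Fn n).card)).le
  rw [ceilExpCard]
  linarith

section Growth

variable [MetricSpace X] [Group G] [MulAction G X]

theorem frequently_mul_exp_lt_sepCard {Fn : ℕ → Finset G}
    (hcard : Tendsto (fun n => (Fn n).card) atTop atTop) {ε h : ℝ} (hh : 0 ≤ h) {K : Set X}
    (hlt : h < hSep Fn ε K) (c : ℝ) :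
    ∃ᶠ n in atTop, c * Real.exp (h * (Fn n).card) < sepCard (Fn n) ε K := by
  obtain ⟨h', hh', hh'K⟩ := exists_between hlt
  have hcob : IsCoboundedUnder (· ≤ ·) atTop
      fun n => Real.log (sepCard (Fn n) ε K : ℕ) / ((Fn n).card : ℝ) :=
    isCoboundedUnder_le_of_le atTop fun n =>
      div_nonneg (Real.log_natCast_nonneg _) (Nat.cast_nonneg _)
  have hcardR : Tendsto (fun n => ((Fn n).card : ℝ)) atTop atTop :=
    tendsto_natCast_atTop_atTop.comp hcard
  have hev : ∀ᶠ n in atTop,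
      0 < ((Fn n).card : ℝ) ∧ c ≤ Real.exp ((h' - h) * (Fn n).card) :=
    (hcardR.eventually_gt_atTop 0).and <|
      (Real.tendsto_exp_atTop.comp (hcardR.const_mul_atTop (sub_pos.2 hh'))).eventually_ge_atTop c
  refine ((frequently_lt_of_lt_limsup hcob hh'K).and_eventually hev).mono ?_
  rintro n ⟨hn, hpos, hc⟩
  have hlog : h' * (Fn n).card < Real.log (sepCard (Fn n) ε K) := (lt_div_iff₀ hpos).1 hn
  have hs : (0 : ℝ) < sepCard (Fn n) ε K :=
    zero_lt_one.trans <| (Real.log_pos_iff (Nat.cast_nonneg _)).1 <|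
      (mul_nonneg (hh.trans hh'.le) hpos.le).trans_lt hlog
  calc c * Real.exp (h * (Fn n).card)
      ≤ Real.exp ((h' - h) * (Fn n).card) * Real.exp (h * (Fn n).card) := by gcongr
    _ = Real.exp (h' * (Fn n).card) := by rw [← Real.exp_add]; ring_nf
    _ < sepCard (Fn n) ε K := by rwa [← Real.lt_log_iff_exp_lt hs]

variable [CompactSpace X]

theorem exists_finset_subset_le_sepCard_and_sepCard_le
    (hcont : ∀ g : G, Continuous fun x : X => g • x) {Fn : ℕ → Finset G} {ε : ℝ} (hε : 0 < ε)
    {N : ℕ → ℕ} (hN : Monotone N) {W : Set X} {m : ℕ}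
    (hW : ∃ l ≥ m, N l ≤ sepCard (Fn l) ε W) :
    ∃ l ≥ m, ∃ A : Finset X, ↑A ⊆ W ∧ N l ≤ sepCard (Fn l) ε (A : Set X) ∧
      ∀ n ≥ m, sepCard (Fn n) ε (A : Set X) ≤ N n := by
  classical
  obtain ⟨hml, hl⟩ := Nat.find_spec hW
  obtain ⟨E, hEW, hE, hEcard⟩ := exists_card_eq_sepCard hcont (Fn (Nat.find hW)) hε W
  obtain ⟨A, hAE, hAcard⟩ := Finset.exists_subset_card_eq (hEcard ▸ hl)
  have hAW : ↑A ⊆ W := (Finset.coe_subset.2 hAE).trans hEW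
  refine ⟨Nat.find hW, hml, A, hAW,
    hAcard ▸ le_sepCard hcont hε subset_rfl (hE.mono (Finset.coe_subset.2 hAE)), fun n hn => ?_⟩
  rcases lt_or_ge n (Nat.find hW) with hnl | hln
  · have hWn : sepCard (Fn n) ε W < N n := not_le.1 fun hle => Nat.find_min hW hnl ⟨hn, hle⟩
    exact (sepCard_mono hcont hε hAW).trans hWn.le
  · exact (sepCard_le_card _ _ A).trans (hAcard ▸ hN hln)

theorem exists_finset_subset_ceilExpCard_le_sepCard
    (hcont : ∀ g : G, Continuous fun x : X => g • x) {Fn : ℕ → Finset G} (hmono : Monotone Fn)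
    (hcard : Tendsto (fun n => (Fn n).card) atTop atTop) {ε h : ℝ} (hε : 0 < ε) (hh : 0 ≤ h)
    {K W : Set X} (hlt : h < hSep Fn ε K) (hKW : (K \ W).Finite) (m : ℕ) :
    ∃ l ≥ m, ∃ A : Finset X, ↑A ⊆ W ∧ ceilExpCard Fn h l ≤ sepCard (Fn l) ε (A : Set X) ∧
      ∀ n ≥ m, sepCard (Fn n) ε (A : Set X) ≤ ceilExpCard Fn h n := by
  refine exists_finset_subset_le_sepCard_and_sepCard_le hcont hε (ceilExpCard_mono hmono hh) ?_
  set C := hKW.toFinset.card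
  obtain ⟨l, hlm, hl⟩ :=
    (frequently_mul_exp_lt_sepCard hcard hh hlt (C + 2)).forall_exists_of_atTop m
  refine ⟨l, hlm, ?_⟩
  have hsplit : sepCard (Fn l) ε K ≤ sepCard (Fn l) ε W + C :=
    calc sepCard (Fn l) ε K ≤ sepCard (Fn l) ε (W ∪ ↑hKW.toFinset) := by
          rw [Set.Finite.coe_toFinset]
          exact sepCard_mono hcont hε (sdiff_subset_iff.1 subset_rfl)
      _ ≤ sepCard (Fn l) ε W + C :=
          (sepCard_union_le hcont _ hε _ _).trans (add_le_add_right (sepCard_le_card _ _ _) _)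
  have hsplitR : (sepCard (Fn l) ε K : ℝ) ≤ sepCard (Fn l) ε W + C := by exact_mod_cast hsplit
  have hexp : 1 ≤ Real.exp (h * (Fn l).card) := Real.one_le_exp (by positivity)
  have hN := ceilExpCard_le_two_mul_exp Fn hh l
  have hC : (0 : ℝ) ≤ C := Nat.cast_nonneg _
  exact_mod_cast (show (ceilExpCard Fn h l : ℝ) ≤ sepCard (Fn l) ε W by
    nlinarith [mul_nonneg hC (sub_nonneg.2 hexp)])

end Growth

theorem finite_iUnion_sdiff_of_eventually_subset {S : ℕ → Set X} (hS : ∀ i, (S i).Finite)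
    {U : Set X} (hU : ∀ᶠ i in atTop, S i ⊆ U) : ((⋃ i, S i) \ U).Finite := by
  obtain ⟨n, hn⟩ := eventually_atTop.1 hU
  refine ((finite_lt_nat n).biUnion fun i _ => hS i).subset ?_
  rintro x ⟨hx, hxU⟩
  obtain ⟨i, hi⟩ := mem_iUnion.1 hx
  exact mem_biUnion (lt_of_not_ge fun hni => hxU (hn i hni hi)) hi

section Accumulation

variable [TopologicalSpace X]

theorem IsCompact.finite_sdiff_of_accPt_iff {K : Set X} (hK : IsCompact K) {x₀ : X}
    (hacc : ∀ x : X, AccPt x (𝓟 K) ↔ x = x₀) {U : Set X} (hU : U ∈ 𝓝 x₀) :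
    (K \ U).Finite := by
  by_contra hinf
  obtain ⟨x, -, hx⟩ := Set.Infinite.exists_accPt_of_subset_isCompact hinf hK sdiff_subset
  obtain rfl := (hacc x).1 (hx.mono (principal_mono.2 sdiff_subset))
  obtain ⟨y, ⟨hyU, -, hyU'⟩, -⟩ := accPt_iff_nhds.1 hx U hU
  exact hyU' hyU

theorem isCompact_insert_of_finite_sdiff {S : Set X} {x₀ : X}
    (hS : ∀ U ∈ 𝓝 x₀, (S \ U).Finite) : IsCompact (insert x₀ S) := by
  have : Tendsto ((↑) : S → X) cofinite (𝓝 x₀) := fun U hU =>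
    ((hS U hU).preimage Subtype.val_injective.injOn).subset fun s hs => ⟨s.2, hs⟩
  simpa using this.isCompact_insert_range_of_cofinite

theorem accPt_iff_eq_of_finite_sdiff [T2Space X] {A : Set X} {x₀ : X}
    (hA : ∀ U ∈ 𝓝 x₀, (A \ U).Finite) (hx₀ : AccPt x₀ (𝓟 A)) (x : X) :
    AccPt x (𝓟 A) ↔ x = x₀ := by
  refine ⟨fun hx => by_contra fun hne => ?_, fun hx => hx ▸ hx₀⟩
  obtain ⟨V, U, hV, hU, hVU⟩ := t2_separation_nhds hne
  exact Set.Infinite.of_accPt (hx.nhds_inter hV)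
    ((hA U hU).subset fun y ⟨hyV, hyA⟩ => ⟨hyA, hVU.notMem_of_mem_left hyV⟩)

theorem accPt_iUnion_of_tendsto_smallSets {S : ℕ → Set X} {x₀ : X}
    (hS : Tendsto S atTop (𝓝 x₀).smallSets) (hne : ∀ i, (S i \ {x₀}).Nonempty) :
    AccPt x₀ (𝓟 (⋃ i, S i)) := by
  refine accPt_iff_nhds.2 fun U hU => ?_
  obtain ⟨i, hi⟩ := (hS.eventually (eventually_smallSets_subset.2 hU)).exists
  obtain ⟨y, hyS, hy⟩ := hne i
  exact ⟨y, ⟨hi hyS, mem_iUnion_of_mem i hyS⟩, hy⟩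

end Accumulation

theorem log_div_le_add_of_le_mul_exp {s c f h η : ℝ} (hs : 0 < s) (hf : 0 < f)
    (hsc : s ≤ c * Real.exp (h * f)) (hc : Real.log c ≤ η * f) : Real.log s / f ≤ h + η := by
  have hc0 : 0 < c := pos_of_mul_pos_left (hs.trans_le hsc) (Real.exp_pos _).le
  rw [div_le_iff₀ hf]
  calc Real.log s ≤ Real.log (c * Real.exp (h * f)) := Real.log_le_log hs hsc
    _ = Real.log c + h * f := by rw [Real.log_mul hc0.ne' (Real.exp_pos _).ne', Real.log_exp]
    _ ≤ (h + η) * f := by linarith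

theorem limsup_eq_of_frequently_le_of_eventually_le {u : ℕ → ℝ} {a : ℝ}
    (hlow : ∃ᶠ n in atTop, a ≤ u n) (hup : ∀ ε > 0, ∀ᶠ n in atTop, u n ≤ a + ε) :
    limsup u atTop = a := by
  have hcob : IsCoboundedUnder (· ≤ ·) atTop u :=
    ⟨a, fun b hb => ((hlow.and_eventually hb).exists.elim fun _ ⟨h1, h2⟩ => h1.trans h2)⟩
  exact le_antisymm (le_of_forall_pos_le_add fun ε hε => limsup_le_of_le hcob (hup ε hε))
    (le_limsup_of_frequently_le hlow (isBoundedUnder_of_eventually_le (hup 1 one_pos)))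

theorem StrictMono.exists_le_lt_succ {φ : ℕ → ℕ} (hφ : StrictMono φ) {K n : ℕ}
    (hn : φ K ≤ n) : ∃ k ≥ K, φ k ≤ n ∧ n < φ (k + 1) := by
  classical
  have hex : ∃ j, n < φ j := ⟨n + 1, (Nat.lt_succ_self n).trans_le (hφ.id_le _)⟩
  have hKj : K < Nat.find hex := lt_of_not_ge fun hjK =>
    (Nat.find_spec hex).not_ge ((hφ.monotone hjK).trans hn)
  obtain ⟨k, hk⟩ : ∃ k, Nat.find hex = k + 1 := ⟨Nat.find hex - 1, by omega⟩
  refine ⟨k, by omega, not_lt.1 (Nat.find_min hex (by omega : k < Nat.find hex)), ?_⟩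
  rw [← hk]
  exact Nat.find_spec hex

section Stages

variable [MetricSpace X] [Group G] [MulAction G X]

structure SepStages (Fn : ℕ → Finset G) (δ h : ℝ) (K₀ : Set X) (x₀ : X) where
  φ : ℕ → ℕ
  l : ℕ → ℕ
  A : ℕ → Finset X
  strictMono_φ : StrictMono φ
  φ_le_l : ∀ i, φ i ≤ l i
  -- makes the factor `k + 2` of `sepCard_toSet_le` negligible at the scales `n ≥ φ k`
  log_le_card : ∀ i : ℕ, (i + 1) * Real.log (2 * (i + 2)) ≤ (Fn (φ i)).card
  subset_sdiff : ∀ i, (A i : Set X) ⊆ K₀ \ {x₀}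
  tendsto_smallSets : Tendsto (fun i => (A i : Set X)) atTop (𝓝 x₀).smallSets
  dist_smul_lt : ∀ i, ∀ x ∈ A i, ∀ g ∈ Fn (φ i), dist (g • x) (g • x₀) < δ / 2
  ceilExpCard_le : ∀ i, ceilExpCard Fn h (l i) ≤ sepCard (Fn (l i)) δ (A i : Set X)
  sepCard_le_ceilExpCard : ∀ i, ∀ n ≥ φ i, sepCard (Fn n) δ (A i : Set X) ≤ ceilExpCard Fn h n

namespace SepStages

variable {Fn : ℕ → Finset G} {δ h : ℝ} {K₀ : Set X} {x₀ : X} (S : SepStages Fn δ h K₀ x₀)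

def toSet : Set X := insert x₀ (⋃ i, (S.A i : Set X))

theorem subset_toSet (i : ℕ) : (S.A i : Set X) ⊆ S.toSet :=
  (subset_iUnion (fun i => (S.A i : Set X)) i).trans (subset_insert _ _)

theorem toSet_subset (hx₀ : x₀ ∈ K₀) : S.toSet ⊆ K₀ :=
  insert_subset hx₀ (iUnion_subset fun i => (S.subset_sdiff i).trans sdiff_subset)

theorem countable_toSet : S.toSet.Countable :=
  (countable_iUnion fun i => (S.A i).countable_toSet).insert x₀

theorem nonempty_sdiff (i : ℕ) : ((S.A i : Set X) \ {x₀}).Nonempty := by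
  obtain ⟨x, hx⟩ : (S.A i).Nonempty := Finset.nonempty_iff_ne_empty.2 fun hA => by
    have := (one_le_ceilExpCard Fn h (S.l i)).trans
      ((S.ceilExpCard_le i).trans (sepCard_le_card _ _ _))
    simp [hA] at this
  exact ⟨x, hx, (S.subset_sdiff i hx).2⟩

theorem finite_iUnion_sdiff {U : Set X} (hU : U ∈ 𝓝 x₀) :
    ((⋃ i, (S.A i : Set X)) \ U).Finite :=
  finite_iUnion_sdiff_of_eventually_subset (fun i => (S.A i).finite_toSet)
    (S.tendsto_smallSets.eventually (eventually_smallSets_subset.2 hU))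

theorem isCompact_toSet : IsCompact S.toSet :=
  isCompact_insert_of_finite_sdiff fun _ => S.finite_iUnion_sdiff

theorem accPt_toSet_iff (x : X) : AccPt x (𝓟 S.toSet) ↔ x = x₀ :=
  accPt_iff_eq_of_finite_sdiff
    (fun U hU => by
      rw [insert_sdiff_of_mem _ (mem_of_mem_nhds hU)]
      exact S.finite_iUnion_sdiff hU)
    ((accPt_iUnion_of_tendsto_smallSets S.tendsto_smallSets S.nonempty_sdiff).mono
      (principal_mono.2 (subset_insert _ _))) x

theorem card_pos (hmono : Monotone Fn) {i n : ℕ} (hn : S.φ i ≤ n) : (0 : ℝ) < (Fn n).card := by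
  have hlog : 0 < Real.log (2 * ((i : ℝ) + 2)) :=
    Real.log_pos (by linarith [i.cast_nonneg (α := ℝ)])
  calc (0 : ℝ) < (i + 1) * Real.log (2 * (i + 2)) := by positivity
    _ ≤ (Fn (S.φ i)).card := S.log_le_card i
    _ ≤ (Fn n).card := by exact_mod_cast Finset.card_le_card (hmono hn)

theorem sepCard_toSet_le [CompactSpace X] (hcont : ∀ g : G, Continuous fun x : X => g • x)
    (hmono : Monotone Fn) (hδ : 0 < δ) {k n : ℕ} (hk : S.φ k ≤ n) (hn : n < S.φ (k + 1)) :
    sepCard (Fn n) δ S.toSet ≤ (k + 2) * ceilExpCard Fn h n := by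
  -- points of the later stages are δ/2-close to x₀ along Fn n, so together they count once
  have hcover : S.toSet ⊆ {x | ∀ g ∈ Fn n, dist (g • x) (g • x₀) < δ / 2} ∪
      ⋃ j ∈ Finset.range (k + 1), (S.A j : Set X) := by
    rintro x (rfl | hx)
    · exact Or.inl fun g _ => by simpa using half_pos hδ
    · obtain ⟨j, hj⟩ := mem_iUnion.1 hx
      rcases lt_or_ge k j with hkj | hjk
      · refine Or.inl fun g hg => S.dist_smul_lt j x hj g (hmono ?_ hg)
        exact hn.le.trans (S.strictMono_φ.monotone hkj)
      · exact Or.inr (mem_biUnion (Finset.mem_range.2 (Nat.lt_succ_of_le hjk)) hj)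
  calc sepCard (Fn n) δ S.toSet
      ≤ 1 + ∑ j ∈ Finset.range (k + 1), sepCard (Fn n) δ (S.A j : Set X) :=
        (sepCard_mono hcont hδ hcover).trans <| (sepCard_union_le hcont _ hδ _ _).trans <|
          add_le_add (sepCard_setOf_dist_lt_half_le_one _ _ _) (sepCard_biUnion_le hcont _ hδ _ _)
    _ ≤ 1 + ∑ _j ∈ Finset.range (k + 1), ceilExpCard Fn h n := by
        gcongr with j hj
        exact S.sepCard_le_ceilExpCard j n
          ((S.strictMono_φ.monotone (Finset.mem_range_succ_iff.1 hj)).trans hk)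
    _ ≤ (k + 2) * ceilExpCard Fn h n := by
        have := one_le_ceilExpCard Fn h n
        rw [Finset.sum_const, Finset.card_range, smul_eq_mul]
        nlinarith

theorem log_sepCard_toSet_div_le [CompactSpace X]
    (hcont : ∀ g : G, Continuous fun x : X => g • x) (hmono : Monotone Fn) (hδ : 0 < δ)
    (hh : 0 ≤ h) {k n : ℕ} (hk : S.φ k ≤ n) (hn : n < S.φ (k + 1)) :
    Real.log (sepCard (Fn n) δ S.toSet) / (Fn n).card ≤ h + 1 / (k + 1) := by
  have hpos : 0 < sepCard (Fn n) δ S.toSet :=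
    le_sepCard hcont hδ (D := {x₀}) (by simp [toSet]) (by simp [IsSeparatedBy])
  have hsep : (sepCard (Fn n) δ S.toSet : ℝ) ≤ (k + 2) * ceilExpCard Fn h n := by
    exact_mod_cast S.sepCard_toSet_le hcont hmono hδ hk hn
  have hcard : ((k : ℝ) + 1) * Real.log (2 * (k + 2)) ≤ (Fn n).card :=
    (S.log_le_card k).trans (by exact_mod_cast Finset.card_le_card (hmono hk))
  refine log_div_le_add_of_le_mul_exp (c := 2 * (k + 2)) (by exact_mod_cast hpos)
    (S.card_pos hmono hk) ?_ ?_
  · nlinarith [ceilExpCard_le_two_mul_exp Fn hh n]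
  · rw [div_mul_eq_mul_div, one_mul, le_div_iff₀ (by positivity)]
    linarith

theorem hSep_toSet [CompactSpace X] (hcont : ∀ g : G, Continuous fun x : X => g • x)
    (hmono : Monotone Fn) (hδ : 0 < δ) (hh : 0 ≤ h) : hSep Fn δ S.toSet = h := by
  refine limsup_eq_of_frequently_le_of_eventually_le ?_ fun ε hε => ?_
  · refine frequently_atTop.2 fun a => ⟨S.l a, (S.strictMono_φ.id_le a).trans (S.φ_le_l a), ?_⟩
    have hsep : ceilExpCard Fn h (S.l a) ≤ sepCard (Fn (S.l a)) δ S.toSet :=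
      (S.ceilExpCard_le a).trans (sepCard_mono hcont hδ (S.subset_toSet a))
    have hexp := (exp_le_ceilExpCard Fn h (S.l a)).trans (Nat.cast_le.2 hsep)
    rw [le_div_iff₀ (S.card_pos hmono (S.φ_le_l a)),
      Real.le_log_iff_exp_le ((Real.exp_pos _).trans_le hexp)]
    exact hexp
  · obtain ⟨K, hK⟩ := exists_nat_one_div_lt hε
    filter_upwards [eventually_ge_atTop (S.φ K)] with n hn
    obtain ⟨k, hkK, hk, hnk⟩ := S.strictMono_φ.exists_le_lt_succ hn
    refine (S.log_sepCard_toSet_div_le hcont hmono hδ hh hk hnk).trans ?_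
    have : 1 / ((k : ℝ) + 1) ≤ 1 / ((K : ℝ) + 1) := by gcongr
    linarith

end SepStages

end Stages

theorem exists_sepStages [MetricSpace X] [CompactSpace X] [Group G] [MulAction G X]
    (hcont : ∀ g : G, Continuous fun x : X => g • x) {Fn : ℕ → Finset G} (hmono : Monotone Fn)
    (hcard : Tendsto (fun n => (Fn n).card) atTop atTop) {K₀ : Set X} (hK₀ : IsCompact K₀)
    {x₀ : X} (hacc : ∀ x : X, AccPt x (𝓟 K₀) ↔ x = x₀) {δ h : ℝ} (hδ : 0 < δ) (hh : 0 ≤ h)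
    (hlt : h < hSep Fn δ K₀) : Nonempty (SepStages Fn δ h K₀ x₀) := by
  obtain ⟨φ, hφ, hφcard⟩ := extraction_forall_of_eventually fun i : ℕ =>
    (tendsto_natCast_atTop_atTop.comp hcard).eventually_ge_atTop
      ((i + 1) * Real.log (2 * (i + 2)))
  obtain ⟨V, hV⟩ := (𝓝 x₀).exists_antitone_basis
  let U i := V i ∩ {x | ∀ g ∈ Fn (φ i), dist (g • x) (g • x₀) < δ / 2}
  have hU (i : ℕ) : U i ∈ 𝓝 x₀ :=
    inter_mem (hV.mem i) (eventually_forall_dist_smul_lt hcont _ x₀ (half_pos hδ))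
  have hKU (i : ℕ) : (K₀ \ ((K₀ ∩ U i) \ {x₀})).Finite :=
    ((hK₀.finite_sdiff_of_accPt_iff hacc (hU i)).union (finite_singleton x₀)).subset
      fun x ⟨hxK, hx⟩ => by
        by_cases hx₀ : x = x₀
        · exact Or.inr hx₀
        · exact Or.inl ⟨hxK, fun hxU => hx ⟨⟨hxK, hxU⟩, hx₀⟩⟩
  choose l hl A hAU hAl hAn using fun i =>
    exists_finset_subset_ceilExpCard_le_sepCard hcont hmono hcard hδ hh hlt (hKU i) (φ i)
  exact ⟨{ φ, l, A
           strictMono_φ := hφ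
           φ_le_l := hl
           log_le_card := hφcard
           subset_sdiff := fun i x hx => ⟨(hAU i hx).1.1, (hAU i hx).2⟩
           tendsto_smallSets := hV.tendsto_smallSets.smallSets_mono <|
             Eventually.of_forall fun i x hx => (hAU i hx).1.2.1
           dist_smul_lt := fun i x hx => (hAU i hx).1.2.2
           ceilExpCard_le := hAl
           sepCard_le_ceilExpCard := hAn }⟩

theorem stmt_12_general [MetricSpace X] [CompactSpace X] [Group G] [MulAction G X]
    (hcont : ∀ g : G, Continuous fun x : X => g • x)
    (Fn : ℕ → Finset G) (hmono : ∀ n, Fn n ⊆ Fn (n + 1))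
    (hcard : Tendsto (fun n => (Fn n).card) atTop atTop)
    (K₀ : Set X) (hK₀cpt : IsCompact K₀)
    (x₀ : X) (hacc : ∀ x : X, AccPt x (Filter.principal K₀) ↔ x = x₀)
    (δ h : ℝ) (hδ : 0 < δ) (hh : 0 < h) (hlt : h < hSep Fn δ K₀) :
    ∃ A : Set X, A ⊆ K₀ ∧ A.Countable ∧ IsCompact A ∧
      (∀ x : X, AccPt x (Filter.principal A) ↔ x = x₀) ∧ hSep Fn δ A = h := by
  have hFn : Monotone Fn := monotone_nat_of_le_succ hmono
  have hx₀ : x₀ ∈ K₀ := isClosed_iff_accPt.1 hK₀cpt.isClosed x₀ ((hacc x₀).2 rfl)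
  obtain ⟨S⟩ := exists_sepStages hcont hFn hcard hK₀cpt hacc hδ hh.le hlt
  exact ⟨S.toSet, S.toSet_subset hx₀, S.countable_toSet, S.isCompact_toSet, S.accPt_toSet_iff,
    S.hSep_toSet hcont hFn hδ hh.le⟩

/-- constructing a subset with prescribed separated-set growth rate. -/
theorem stmt_12 [MetricSpace X] [CompactSpace X] [Group G] [Countable G] [MulAction G X]
    (hcont : ∀ g : G, Continuous fun x : X => g • x)
    (Fn : ℕ → Finset G) (hmono : ∀ n, Fn n ⊆ Fn (n + 1)) (h1 : (1 : G) ∈ Fn 0)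
    (hcard : Tendsto (fun n => (Fn n).card) atTop atTop)
    (K₀ : Set X) (hK₀ctble : K₀.Countable) (hK₀cpt : IsCompact K₀)
    (x₀ : X) (hacc : ∀ x : X, AccPt x (Filter.principal K₀) ↔ x = x₀)
    (δ h : ℝ) (hδ : 0 < δ) (hh : 0 < h) (hlt : h < hSep Fn δ K₀) :
    ∃ A : Set X, A ⊆ K₀ ∧ A.Countable ∧ IsCompact A ∧
      (∀ x : X, AccPt x (Filter.principal A) ↔ x = x₀) ∧ hSep Fn δ A = h :=
  stmt_12_general hcont Fn hmono hcard K₀ hK₀cpt x₀ hacc δ h hδ hh hlt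
end
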